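/- Observation 2.1. There exist a temporal graph G = (V,E,T,α,β) and two vertices s,z ∈ V such that at least one temporal walk from s to z exists, yet no temporal walk from s to z is a temporal path (i.e., every temporal walk from s to z repeats a vertex). -/

import Mathlib

namespace TW

/-- A time-arc `(v, w, t, λ)` of a temporal graph: a directed connection
from `src` to `dst` with time stamp `ts` and transmission time `tt`. -/
structure TArc (V : Type*) where
  src : V
  dst : V
  ts : ℕ
  tt : ℕ
deriving DecidableEq

/-- A time-arc `(v, w, t)` of an instantaneous temporal graph. -/
structure IArc (V : Type*) where
  src : V
  dst : V
  ts : ℕ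
deriving DecidableEq

variable {V : Type*}

/-- `ValidTG Vset T E af bf` expresses that `(Vset, E, T, af, bf)` is a temporal
graph: `E ⊆ V × V × {1,…,T} × {0,…,T}` and `af, bf : V → {0,…,T}`. -/
def ValidTG (Vset : Finset V) (T : ℕ) (E : Finset (TArc V))
    (af bf : V → ℕ) : Prop :=
  (∀ e ∈ E, e.src ∈ Vset ∧ e.dst ∈ Vset ∧ 1 ≤ e.ts ∧ e.ts ≤ T ∧ e.tt ≤ T) ∧
    ∀ v, af v ≤ T ∧ bf v ≤ T

/-- Validity for an instantaneous temporal graph `(Vset, E, T, bf)`. -/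
def ValidIG (Vset : Finset V) (T : ℕ) (E : Finset (IArc V))
    (bf : V → ℕ) : Prop :=
  (∀ e ∈ E, e.src ∈ Vset ∧ e.dst ∈ Vset ∧ 1 ≤ e.ts ∧ e.ts ≤ T) ∧
    ∀ v, bf v ≤ T

/-- A temporal walk from `s` to `z` in the temporal graph with time-arc set `E`,
minimum waiting times `af`, and maximum waiting times `bf`:
a nonempty sequence `((v_{i-1}, v_i, t_i, λ_i))_{i=1}^k` of time-arcs of `E`
with `v_0 = s`, `v_k = z`, and
`t_i + λ_i + af v_i ≤ t_{i+1} ≤ t_i + λ_i + bf v_i` for all `i ∈ {1,…,k-1}`. -/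
def IsTWalk (E : Finset (TArc V)) (af bf : V → ℕ) (s z : V)
    (P : List (TArc V)) : Prop :=
  P ≠ [] ∧ (∀ e ∈ P, e ∈ E) ∧
    P.head?.map TArc.src = some s ∧ P.getLast?.map TArc.dst = some z ∧
    List.Chain' (fun e f => e.dst = f.src ∧
      e.ts + e.tt + af e.dst ≤ f.ts ∧ f.ts ≤ e.ts + e.tt + bf e.dst) P

/-- A temporal walk from `s` to `z` in an instantaneous temporal graph. -/
def IsIWalk (E : Finset (IArc V)) (bf : V → ℕ) (s z : V)
    (P : List (IArc V)) : Prop :=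
  P ≠ [] ∧ (∀ e ∈ P, e ∈ E) ∧
    P.head?.map IArc.src = some s ∧ P.getLast?.map IArc.dst = some z ∧
    List.Chain' (fun e f => e.dst = f.src ∧
      e.ts ≤ f.ts ∧ f.ts ≤ e.ts + bf e.dst) P

/-- The vertex sequence `v_0, v_1, …, v_k` of a walk. -/
def tVerts (P : List (TArc V)) : List V :=
  (P.head?.map TArc.src).toList ++ P.map TArc.dst

/-- The vertex sequence `v_0, v_1, …, v_k` of a walk (instantaneous case). -/
def iVerts (P : List (IArc V)) : List V :=
  (P.head?.map IArc.src).toList ++ P.map IArc.dst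

/-- Departure time `t_1` of a walk. -/
def tFirst (P : List (TArc V)) : ℕ := (P.head?.map TArc.ts).getD 0

/-- Arrival time `t_k + λ_k` of a walk. -/
def tLastArr (P : List (TArc V)) : ℕ :=
  (P.getLast?.map (fun e => e.ts + e.tt)).getD 0

/-- First time stamp `t_1` of an instantaneous walk. -/
def iFirst (P : List (IArc V)) : ℕ := (P.head?.map IArc.ts).getD 0

/-- Last time stamp `t_m` of an instantaneous walk. -/
def iLast (P : List (IArc V)) : ℕ := (P.getLast?.map IArc.ts).getD 0

/-- Total waiting time `∑_{i=1}^{k-1} (t_{i+1} - (t_i + λ_i))` of a walk. -/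
def waitSum (P : List (TArc V)) : ℚ :=
  ((P.zip P.tail).map
    (fun ef => (ef.2.ts : ℚ) - ((ef.1.ts : ℚ) + (ef.1.tt : ℚ)))).sum

/-- `val(P)`: the linear combination
`δ1·(t_k+λ_k) + δ2·(−t_1) + δ3·(t_k+λ_k−t_1) + δ4·Σλ_i + δ5·Σc(e_i) + δ6·k
 + δ7·Σ(t_{i+1}−(t_i+λ_i))`. -/
def val (c : TArc V → ℕ) (d1 d2 d3 d4 d5 d6 d7 : ℚ) (P : List (TArc V)) : ℚ :=
  d1 * (tLastArr P : ℚ) + d2 * (-(tFirst P : ℚ))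
    + d3 * ((tLastArr P : ℚ) - (tFirst P : ℚ))
    + d4 * (P.map (fun e => (e.tt : ℚ))).sum
    + d5 * (P.map (fun e => (c e : ℚ))).sum
    + d6 * (P.length : ℚ) + d7 * waitSum P

/-- `∑_{i=1}^{m-1} ((t_{i+1} − (t_i − A(v_i)))·ind(v_i))` for an instantaneous
walk, where `v_i` is the intermediate vertex between `e_i` and `e_{i+1}`. -/
def iWaitSum (ind A : V → ℕ) (P : List (IArc V)) : ℚ :=
  ((P.zip P.tail).map
    (fun ef => ((ef.2.ts : ℚ) - ((ef.1.ts : ℚ) - (A ef.1.dst : ℚ)))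
      * (ind ef.1.dst : ℚ))).sum

/-- `val'(P)`: the adapted linear combination
`δ1·t_m + δ2·(−t_1) + δ3·(t_m−t_1) + δ4·Σc_λ(e_i) + δ5·Σc(e_i) + (δ6/2)·m
 + δ7·Σ((t_{i+1}−(t_i−A(v_i)))·ind(v_i))` for instantaneous walks. -/
def val' (c cl : IArc V → ℕ) (ind A : V → ℕ) (d1 d2 d3 d4 d5 d6 d7 : ℚ)
    (P : List (IArc V)) : ℚ :=
  d1 * (iLast P : ℚ) + d2 * (-(iFirst P : ℚ))
    + d3 * ((iLast P : ℚ) - (iFirst P : ℚ))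
    + d4 * (P.map (fun e => (cl e : ℚ))).sum
    + d5 * (P.map (fun e => (c e : ℚ))).sum
    + (d6 / 2) * (P.length : ℚ) + d7 * iWaitSum ind A P

section Transformation

variable [DecidableEq V]

/-- The arcs `E^O = {(v, v_e, t) : e = (v,u,t,λ) ∈ E}` of Transformation 1. -/
def trEO (E : Finset (TArc V)) : Finset (IArc (V ⊕ TArc V)) :=
  E.image (fun e => ⟨Sum.inl e.src, Sum.inr e, e.ts⟩)

/-- The arcs `E^I = {(v_e, u, t+λ+α(u)) : e = (v,u,t,λ) ∈ E}`. -/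
def trEI (af : V → ℕ) (E : Finset (TArc V)) : Finset (IArc (V ⊕ TArc V)) :=
  E.image (fun e => ⟨Sum.inr e, Sum.inl e.dst, e.ts + e.tt + af e.dst⟩)

/-- The arc set `E' = E^O ∪ E^I` of the transformed instantaneous graph. -/
def trE (af : V → ℕ) (E : Finset (TArc V)) : Finset (IArc (V ⊕ TArc V)) :=
  trEO E ∪ trEI af E

/-- `β'`: `β' v = β v` for `v ∈ V` and `β' v_e = T` for arc vertices. -/
def trBeta (bf : V → ℕ) (T : ℕ) : V ⊕ TArc V → ℕ :=
  Sum.elim bf (fun _ => T)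

/-- The transformed cost function `c'`. -/
def trC (c : TArc V → ℕ) : IArc (V ⊕ TArc V) → ℕ := fun e' =>
  match e'.src, e'.dst with
  | Sum.inl _, Sum.inr eh => c eh
  | _, _ => 0

/-- The transmission-cost function `c_λ`. -/
def trCl : IArc (V ⊕ TArc V) → ℕ := fun e' =>
  match e'.src, e'.dst with
  | Sum.inr eh, Sum.inl _ => eh.tt
  | _, _ => 0

/-- The vertex-index function `ind`: `1` on original vertices, `0` else. -/
def trInd : V ⊕ TArc V → ℕ := Sum.elim (fun _ => 1) (fun _ => 0)

/-- The auxiliary function `A`: `A v = α v` on original vertices, `0` else. -/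
def trA (af : V → ℕ) : V ⊕ TArc V → ℕ := Sum.elim af (fun _ => 0)

/-- The walk `P'` in `G'` corresponding to a walk `P` in `G`:
each arc `e = (v,u,t,λ)` is replaced by the two arcs
`(v, v_e, t)` and `(v_e, u, t+λ+α(u))`. -/
def corr (af : V → ℕ) (P : List (TArc V)) : List (IArc (V ⊕ TArc V)) :=
  P.flatMap (fun e =>
    [⟨Sum.inl e.src, Sum.inr e, e.ts⟩,
     ⟨Sum.inr e, Sum.inl e.dst, e.ts + e.tt + af e.dst⟩])

end Transformation

/-! Vertex `0` has the single out-arc `(0,1,1,0)` and vertex `3` the single in-arc `(1,3,4,0)`,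
so every walk from `0` to `3` arrives at `1` first and leaves `1` last. A path visits `1`
once, so it would consist of these two arcs alone and wait at `1` from time `1` to time `4`,
longer than `β 1 = 1` allows; a walk bridges the wait with the detour `1 → 2 → 1`. -/

-- The second and the penultimate vertex of such a walk are both `u`.
theorem IsTWalk.eq_pair_of_nodup {E : Finset (TArc V)} {af bf : V → ℕ} {s u z : V}
    {P : List (TArc V)} (hP : IsTWalk E af bf s z P) (hnd : (tVerts P).Nodup)
    (hout : ∀ e ∈ E, e.src = s → e.dst = u) (hin : ∀ e ∈ E, e.dst = z → e.src = u) :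
    ∃ e f, P = [e, f] := by
  obtain ⟨hne, hmem, hhead, hlast, hchain⟩ := hP
  obtain _ | ⟨e, R⟩ := P
  · exact absurd rfl hne
  have he : e.dst = u := hout e (hmem e (by simp)) (by simpa using hhead)
  obtain rfl | ⟨R, g, rfl⟩ := R.eq_nil_or_concat'
  · have : e.src = u := hin e (hmem e (by simp)) (by simpa using hlast)
    simp [tVerts, he, this] at hnd
  have hg : g.src = u := hin g (hmem g (by simp)) (by
    rw [← List.cons_append, List.getLast?_concat] at hlast; simpa using hlast)
  obtain rfl | ⟨Q, h, rfl⟩ := R.eq_nil_or_concat'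
  · exact ⟨e, g, rfl⟩
  have hh : h.dst = g.src := by
    rw [← List.cons_append, List.Chain', List.isChain_append] at hchain
    exact (hchain.2.2 h (by rw [← List.cons_append, List.getLast?_concat]; rfl) g (by simp)).1
  simp [tVerts, he, hh, hg] at hnd

def exampleWalk : List (TArc (Fin 5)) :=
  [⟨0, 1, 1, 0⟩, ⟨1, 2, 2, 0⟩, ⟨2, 1, 3, 0⟩, ⟨1, 3, 4, 0⟩]

def exampleArcs : Finset (TArc (Fin 5)) := exampleWalk.toFinset

theorem validTG_example : ValidTG Finset.univ 5 exampleArcs (fun _ => 0) (fun _ => 1) := by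
  unfold ValidTG; decide

theorem isTWalk_exampleWalk : IsTWalk exampleArcs (fun _ => 0) (fun _ => 1) 0 3 exampleWalk := by
  refine ⟨by decide, by decide, rfl, rfl, ?_⟩
  change List.IsChain _ exampleWalk
  decide

theorem not_isTWalk_pair (e f : TArc (Fin 5)) :
    ¬ IsTWalk exampleArcs (fun _ => 0) (fun _ => 1) 0 3 [e, f] := by
  rintro ⟨-, hmem, hhead, hlast, hchain⟩
  have hstep : ∀ e ∈ exampleArcs, ∀ f ∈ exampleArcs, e.src = 0 → f.dst = 3 →
      ¬ (e.dst = f.src ∧ e.ts + e.tt + 0 ≤ f.ts ∧ f.ts ≤ e.ts + e.tt + 1) := by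
    decide
  have hef := List.isChain_pair.mp (show List.IsChain _ [e, f] from hchain)
  exact hstep e (hmem e (by simp)) f (hmem f (by simp)) (by simpa using hhead)
    (by simpa using hlast) hef

/-- **Observation 2.1.** There exist a temporal graph `G = (V,E,T,α,β)` and two
vertices `s, z` such that at least one temporal walk from `s` to `z` exists,
yet no temporal walk from `s` to `z` is a temporal path (every temporal walk
from `s` to `z` repeats a vertex). -/
theorem observation_walk_but_no_path :
    ∃ (T : ℕ) (Vset : Finset (Fin 5)) (E : Finset (TArc (Fin 5)))
      (af bf : Fin 5 → ℕ) (s z : Fin 5),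
      ValidTG Vset T E af bf ∧
      (∃ P, IsTWalk E af bf s z P) ∧
      ∀ P, IsTWalk E af bf s z P → ¬ (tVerts P).Nodup := by
  refine ⟨5, Finset.univ, exampleArcs, fun _ => 0, fun _ => 1, 0, 3, validTG_example,
    ⟨exampleWalk, isTWalk_exampleWalk⟩, fun P hP hnd => ?_⟩
  obtain ⟨e, f, rfl⟩ := hP.eq_pair_of_nodup (u := 1) hnd (by decide) (by decide)
  exact not_isTWalk_pair e f hP

end TW
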